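/- Let (W_k)_{k≥0} be a sequence of row-stochastic real n×n matrices and let Γ(k) = W_k·W_{k−1}···W_0. Suppose there exist μ ∈ (0,1), a positive integer N, and integers 0 = m_0 < m_1 < m_2 < ⋯ with m_{h+1} − m_h ≤ N for all h, such that for every h the block product W_{m_{h+1}−1}···W_{m_h} has some column q_h with all entries at least μ. Let ρ ∈ ℝ^n be the probability vector with lim_{k→∞} Γ(k)_{ij} = ρ_j for all i, j. Then for all k ≥ 0 and all i, j: |Γ(k)_{ij} − ρ_j| ≤ (1 − μ)^{−2}·(1 − μ)^{k/N}, where (1 − μ)^{k/N} denotes the real power with exponent k/N. -/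
import Mathlib


/-- A real matrix is row-stochastic if all its entries are nonnegative and each of its
rows sums to 1. -/
def RowStochastic {n : ℕ} (A : Matrix (Fin n) (Fin n) ℝ) : Prop :=
  (∀ i j, 0 ≤ A i j) ∧ ∀ i, ∑ j, A i j = 1

/-- `leftProd W s t = W (s+t-1) * ⋯ * W (s+1) * W s` (the product of `t` consecutive
factors starting at index `s`, with later factors multiplied on the left). -/
noncomputable def leftProd {n : ℕ} (W : ℕ → Matrix (Fin n) (Fin n) ℝ) (s : ℕ) :
    ℕ → Matrix (Fin n) (Fin n) ℝ
  | 0 => 1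
  | t + 1 => W (s + t) * leftProd W s t

open Finset

section Aux

variable {n : ℕ}

lemma rs_mul {A B : Matrix (Fin n) (Fin n) ℝ} (hA : RowStochastic A) (hB : RowStochastic B) :
    RowStochastic (A * B) := by
  constructor
  · intro i j
    rw [Matrix.mul_apply]
    exact Finset.sum_nonneg fun l _ => mul_nonneg (hA.1 i l) (hB.1 l j)
  · intro i
    simp only [Matrix.mul_apply]
    rw [Finset.sum_comm]
    simp_rw [← Finset.mul_sum]
    simp only [hB.2, mul_one]
    exact hA.2 i

lemma rs_one : RowStochastic (1 : Matrix (Fin n) (Fin n) ℝ) := by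
  constructor
  · intro i j
    simp [Matrix.one_apply]
    split <;> norm_num
  · intro i
    simp [Matrix.one_apply]

lemma leftProd_zero (W : ℕ → Matrix (Fin n) (Fin n) ℝ) (s : ℕ) : leftProd W s 0 = 1 := rfl

lemma leftProd_succ (W : ℕ → Matrix (Fin n) (Fin n) ℝ) (s t : ℕ) :
    leftProd W s (t + 1) = W (s + t) * leftProd W s t := rfl

lemma leftProd_rs {W : ℕ → Matrix (Fin n) (Fin n) ℝ} (hstoch : ∀ k, RowStochastic (W k))
    (s t : ℕ) : RowStochastic (leftProd W s t) := by
  induction t with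
  | zero => exact rs_one
  | succ t ih => exact rs_mul (hstoch _) ih

lemma leftProd_add (W : ℕ → Matrix (Fin n) (Fin n) ℝ) (s a b : ℕ) :
    leftProd W s (a + b) = leftProd W (s + a) b * leftProd W s a := by
  induction b with
  | zero => simp [leftProd_zero]
  | succ b ih =>
    rw [show a + (b + 1) = (a + b) + 1 from rfl, leftProd_succ, leftProd_succ, ih,
      ← mul_assoc, add_assoc]

variable [Nonempty (Fin n)]

noncomputable def maxcol (A : Matrix (Fin n) (Fin n) ℝ) (j : Fin n) : ℝ :=
  Finset.sup' Finset.univ Finset.univ_nonempty (fun i => A i j)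

noncomputable def mincol (A : Matrix (Fin n) (Fin n) ℝ) (j : Fin n) : ℝ :=
  Finset.inf' Finset.univ Finset.univ_nonempty (fun i => A i j)

lemma mincol_le (A : Matrix (Fin n) (Fin n) ℝ) (i j : Fin n) : mincol A j ≤ A i j :=
  Finset.inf'_le _ (Finset.mem_univ i)

lemma le_maxcol (A : Matrix (Fin n) (Fin n) ℝ) (i j : Fin n) : A i j ≤ maxcol A j :=
  Finset.le_sup' (fun i => A i j) (Finset.mem_univ i)

lemma mul_lower {A : Matrix (Fin n) (Fin n) ℝ} (hA : RowStochastic A)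
    (B : Matrix (Fin n) (Fin n) ℝ) (i j : Fin n) : mincol B j ≤ (A * B) i j := by
  rw [Matrix.mul_apply]
  calc mincol B j = ∑ l, A i l * mincol B j := by rw [← Finset.sum_mul, hA.2, one_mul]
    _ ≤ ∑ l, A i l * B l j :=
      Finset.sum_le_sum fun l _ => mul_le_mul_of_nonneg_left (mincol_le B l j) (hA.1 i l)

lemma mul_upper {A : Matrix (Fin n) (Fin n) ℝ} (hA : RowStochastic A)
    (B : Matrix (Fin n) (Fin n) ℝ) (i j : Fin n) : (A * B) i j ≤ maxcol B j := by
  rw [Matrix.mul_apply]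
  calc ∑ l, A i l * B l j ≤ ∑ l, A i l * maxcol B j :=
      Finset.sum_le_sum fun l _ => mul_le_mul_of_nonneg_left (le_maxcol B l j) (hA.1 i l)
    _ = maxcol B j := by rw [← Finset.sum_mul, hA.2, one_mul]

lemma osc_mul_le {A : Matrix (Fin n) (Fin n) ℝ} (hA : RowStochastic A)
    (B : Matrix (Fin n) (Fin n) ℝ) (j : Fin n) :
    maxcol (A * B) j - mincol (A * B) j ≤ maxcol B j - mincol B j := by
  have h1 : maxcol (A * B) j ≤ maxcol B j :=
    Finset.sup'_le _ _ fun i _ => mul_upper hA B i j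
  have h2 : mincol B j ≤ mincol (A * B) j :=
    Finset.le_inf' _ _ fun i _ => mul_lower hA B i j
  linarith

lemma osc_le_one {A : Matrix (Fin n) (Fin n) ℝ} (hA : RowStochastic A) (j : Fin n) :
    maxcol A j - mincol A j ≤ 1 := by
  have h1 : maxcol A j ≤ 1 := by
    apply Finset.sup'_le
    intro i _
    calc A i j ≤ ∑ j', A i j' :=
        Finset.single_le_sum (fun j' _ => hA.1 i j') (Finset.mem_univ j)
      _ = 1 := hA.2 i
  have h2 : (0 : ℝ) ≤ mincol A j := Finset.le_inf' _ _ fun i _ => hA.1 i j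
  linarith

lemma contraction {A : Matrix (Fin n) (Fin n) ℝ} {μ : ℝ} (hA : RowStochastic A)
    {q : Fin n} (hq : ∀ i, μ ≤ A i q)
    (B : Matrix (Fin n) (Fin n) ℝ) (j : Fin n) :
    maxcol (A * B) j - mincol (A * B) j ≤ (1 - μ) * (maxcol B j - mincol B j) := by
  have hg0 : ∀ i l, (0:ℝ) ≤ A i l - if l = q then μ else 0 := by
    intro i l
    split
    · next h => subst h; linarith [hq i]
    · simpa using hA.1 i l
  have hgsum : ∀ i, ∑ l, (A i l - if l = q then μ else 0) = 1 - μ := by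
    intro i
    rw [Finset.sum_sub_distrib, hA.2, Finset.sum_ite_eq' Finset.univ q (fun _ => μ)]
    simp
  have key : ∀ i, (A * B) i j - μ * B q j
      = ∑ l, (A i l - if l = q then μ else 0) * B l j := by
    intro i
    rw [Matrix.mul_apply]
    simp_rw [sub_mul, ite_mul, zero_mul]
    rw [Finset.sum_sub_distrib, Finset.sum_ite_eq' Finset.univ q (fun l => μ * B l j)]
    simp
  have upper : ∀ i, (A * B) i j - μ * B q j ≤ (1 - μ) * maxcol B j := by
    intro i
    rw [key i, ← hgsum i, Finset.sum_mul]
    exact Finset.sum_le_sum fun l _ =>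
      mul_le_mul_of_nonneg_left (le_maxcol B l j) (hg0 i l)
  have lower : ∀ i, (1 - μ) * mincol B j ≤ (A * B) i j - μ * B q j := by
    intro i
    rw [key i, ← hgsum i, Finset.sum_mul]
    exact Finset.sum_le_sum fun l _ =>
      mul_le_mul_of_nonneg_left (mincol_le B l j) (hg0 i l)
  obtain ⟨i, -, hi⟩ := Finset.exists_mem_eq_sup' (Finset.univ_nonempty (α := Fin n))
    (fun i => (A * B) i j)
  obtain ⟨i', -, hi'⟩ := Finset.exists_mem_eq_inf' (Finset.univ_nonempty (α := Fin n))
    (fun i => (A * B) i j)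
  have hu := upper i
  have hl := lower i'
  have : maxcol (A * B) j = (A * B) i j := hi
  have : mincol (A * B) j = (A * B) i' j := hi'
  rw [show maxcol (A * B) j = (A * B) i j from hi,
    show mincol (A * B) j = (A * B) i' j from hi']
  nlinarith [hu, hl]

end Aux

/-- under the hypotheses of Statement 17 (with μ ∈ (0,1)), letting ρ be the
probability vector with Γ(k)_{ij} → ρ_j, one has the exponential rate
|Γ(k)_{ij} − ρ_j| ≤ (1 − μ)^{−2}·(1 − μ)^{k/N}, the last power being a real power. -/
theorem stmt18 (n : ℕ) (hn : 0 < n) (W : ℕ → Matrix (Fin n) (Fin n) ℝ)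
    (hstoch : ∀ k, RowStochastic (W k))
    (μ : ℝ) (hμ0 : 0 < μ) (hμ1 : μ < 1)
    (N : ℕ) (hN : 0 < N)
    (m : ℕ → ℕ) (hm0 : m 0 = 0)
    (hmono : ∀ h, m h < m (h + 1)) (hlen : ∀ h, m (h + 1) - m h ≤ N)
    (hcol : ∀ h, ∃ q : Fin n, ∀ i, μ ≤ leftProd W (m h) (m (h + 1) - m h) i q)
    (ρ : Fin n → ℝ) (hρ0 : ∀ j, 0 ≤ ρ j) (hρ1 : ∑ j, ρ j = 1)
    (hlim : ∀ i j, Filter.Tendsto (fun k => leftProd W 0 (k + 1) i j)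
      Filter.atTop (nhds (ρ j))) :
    ∀ (k : ℕ) (i j : Fin n),
      |leftProd W 0 (k + 1) i j - ρ j| ≤
        ((1 - μ) ^ 2)⁻¹ * (1 - μ) ^ ((k : ℝ) / (N : ℝ)) := by
  haveI : Nonempty (Fin n) := ⟨⟨0, hn⟩⟩
  have hμ1' : (0:ℝ) < 1 - μ := by linarith
  -- oscillation at block times
  have hblock : ∀ h j, maxcol (leftProd W 0 (m h)) j - mincol (leftProd W 0 (m h)) j
      ≤ (1 - μ) ^ h := by
    intro h
    induction h with
    | zero =>
      intro j
      rw [hm0, pow_zero]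
      exact osc_le_one (leftProd_rs hstoch 0 0) j
    | succ h ih =>
      intro j
      have hd : m h + (m (h + 1) - m h) = m (h + 1) := by have := hmono h; omega
      obtain ⟨q, hq⟩ := hcol h
      have hdecomp : leftProd W 0 (m (h + 1))
          = leftProd W (m h) (m (h + 1) - m h) * leftProd W 0 (m h) := by
        rw [← hd, leftProd_add]
        simp
      rw [hdecomp, pow_succ, mul_comm ((1-μ)^h)]
      calc maxcol (leftProd W (m h) (m (h + 1) - m h) * leftProd W 0 (m h)) j -
            mincol (leftProd W (m h) (m (h + 1) - m h) * leftProd W 0 (m h)) j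
          ≤ (1 - μ) * (maxcol (leftProd W 0 (m h)) j - mincol (leftProd W 0 (m h)) j) :=
            contraction (leftProd_rs hstoch _ _) hq _ j
        _ ≤ (1 - μ) * (1 - μ) ^ h := by
            exact mul_le_mul_of_nonneg_left (ih j) hμ1'.le
  -- m h ≤ h * N
  have hmN : ∀ h, m h ≤ h * N := by
    intro h
    induction h with
    | zero => simp [hm0]
    | succ h ih =>
      have h1 := hlen h
      have h2 := hmono h
      have : m (h + 1) ≤ m h + N := by omega
      calc m (h + 1) ≤ m h + N := this
        _ ≤ h * N + N := by omega
        _ = (h + 1) * N := by ring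
  -- general oscillation bound
  have hosc : ∀ k j, maxcol (leftProd W 0 (k + 1)) j - mincol (leftProd W 0 (k + 1)) j
      ≤ (1 - μ) ^ ((k + 1) / N) := by
    intro k j
    set h := (k + 1) / N with hh
    have hmh : m h ≤ k + 1 := le_trans (hmN h) (by rw [hh]; exact Nat.div_mul_le_self _ _)
    have hdecomp : leftProd W 0 (k + 1)
        = leftProd W (m h) (k + 1 - m h) * leftProd W 0 (m h) := by
      rw [show k + 1 = m h + (k + 1 - m h) by omega, leftProd_add]
      simp
    calc maxcol (leftProd W 0 (k + 1)) j - mincol (leftProd W 0 (k + 1)) j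
        ≤ maxcol (leftProd W 0 (m h)) j - mincol (leftProd W 0 (m h)) j := by
          rw [hdecomp]; exact osc_mul_le (leftProd_rs hstoch _ _) _ j
      _ ≤ (1 - μ) ^ h := hblock h j
  -- main estimate
  intro k i j
  set P := leftProd W 0 (k + 1) with hP
  -- ρ j lies between mincol P j and maxcol P j
  have hmem : ∀ K : ℕ, mincol P j ≤ leftProd W 0 (K + k + 1) i j ∧
      leftProd W 0 (K + k + 1) i j ≤ maxcol P j := by
    intro K
    have : leftProd W 0 (K + k + 1) = leftProd W (k + 1) K * P := by
      rw [show K + k + 1 = (k + 1) + K by omega, leftProd_add]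
      simp [hP]
    rw [this]
    exact ⟨mul_lower (leftProd_rs hstoch _ _) _ i j,
      mul_upper (leftProd_rs hstoch _ _) _ i j⟩
  have htend : Filter.Tendsto (fun K => leftProd W 0 (K + k + 1) i j)
      Filter.atTop (nhds (ρ j)) := by
    have := (hlim i j).comp (Filter.tendsto_add_atTop_nat k)
    exact this
  have h1 : mincol P j ≤ ρ j :=
    ge_of_tendsto htend (Filter.Eventually.of_forall fun K => (hmem K).1)
  have h2 : ρ j ≤ maxcol P j :=
    le_of_tendsto htend (Filter.Eventually.of_forall fun K => (hmem K).2)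
  have h3 : mincol P j ≤ P i j := mincol_le P i j
  have h4 : P i j ≤ maxcol P j := le_maxcol P i j
  have habs : |P i j - ρ j| ≤ (1 - μ) ^ ((k + 1) / N) := by
    have h5 := hosc k j
    rw [abs_le]
    constructor <;> [linarith; linarith]
  -- compare with the rpow bound
  set h := (k + 1) / N with hh
  have hN' : (0:ℝ) < N := by exact_mod_cast hN
  have hkr : (k:ℝ) / N - 2 ≤ (h:ℕ) := by
    have hlt : k + 1 < N * (h + 1) := by
      have e1 := Nat.div_add_mod (k + 1) N
      have e2 := Nat.mod_lt (k + 1) hN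
      rw [← hh] at e1
      calc k + 1 = N * h + (k + 1) % N := e1.symm
        _ < N * h + N := by omega
        _ = N * (h + 1) := by ring
    have hltr : (k:ℝ) < N * (h + 2) := by
      have : (k:ℝ) + 1 < N * (h + 1) := by exact_mod_cast hlt
      nlinarith
    have : (k:ℝ) / N ≤ (h:ℝ) + 2 := by
      rw [div_le_iff₀ hN']
      nlinarith
    linarith
  have hrpow : (1 - μ) ^ h ≤ ((1 - μ) ^ 2)⁻¹ * (1 - μ) ^ ((k : ℝ) / (N : ℝ)) := by
    have e1 : ((1 - μ) : ℝ) ^ h = (1 - μ) ^ ((h : ℕ) : ℝ) := (Real.rpow_natCast _ h).symm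
    have e2 : ((1 - μ) ^ 2)⁻¹ * (1 - μ) ^ ((k : ℝ) / (N : ℝ))
        = (1 - μ) ^ ((k : ℝ) / (N : ℝ) - 2) := by
      rw [Real.rpow_sub hμ1', show ((2:ℝ)) = ((2:ℕ):ℝ) by norm_num, Real.rpow_natCast]
      ring
    rw [e1, e2]
    exact Real.rpow_le_rpow_of_exponent_ge hμ1' (by linarith) hkr
  exact le_trans habs hrpow
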